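/- Quantum equality with an auxiliary register: let U1 : Q1 → Z, U2 : Q2 → Z be bounded and ψ ∈ R a unit vector in a further Hilbert space R. Then Eq(U1,U2) ⊗ R intersected with (Q1 ⊗ Q2 ⊗ span{ψ}) equals Eq(U1 ⊗ id_R, U2 ⊗ ψ), where on the right U2 ⊗ ψ : Q2 → Z ⊗ R sends q to (U2 q) ⊗ ψ, and Eq denotes the fixed-point subspace of the corresponding swap-with-transfer operator (here the first register is Q1 ⊗ R and the second is Q2). -/

import Mathlib

open scoped Kronecker

noncomputable section

def tensVec {ι κ : Type*} [Fintype ι] [Fintype κ]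
    (x : EuclideanSpace ℂ ι) (y : EuclideanSpace ℂ κ) : EuclideanSpace ℂ (ι × κ) :=
  WithLp.toLp 2 (fun p : ι × κ => x p.1 * y p.2)

def reindexCLM {ι κ : Type*} [Fintype ι] [Fintype κ] (e : ι ≃ κ) :
    EuclideanSpace ℂ ι →L[ℂ] EuclideanSpace ℂ κ :=
  LinearMap.toContinuousLinearMap
    { toFun := fun f => (WithLp.toLp 2 (fun j => f (e.symm j)) : EuclideanSpace ℂ κ)
      map_add' := fun _ _ => by first | rfl | (ext; simp)
      map_smul' := fun _ _ => by first | rfl | (ext; simp) }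

def opTensCLM {ι κ μ ν : Type*} [Fintype ι] [Fintype κ] [Fintype μ] [Fintype ν]
    [DecidableEq κ] [DecidableEq ν]
    (A : EuclideanSpace ℂ κ →L[ℂ] EuclideanSpace ℂ ι)
    (B : EuclideanSpace ℂ ν →L[ℂ] EuclideanSpace ℂ μ) :
    EuclideanSpace ℂ (κ × ν) →L[ℂ] EuclideanSpace ℂ (ι × μ) :=
  LinearMap.toContinuousLinearMap <| Matrix.toEuclideanLin <|
    (Matrix.toEuclideanLin.symm (A : EuclideanSpace ℂ κ →ₗ[ℂ] EuclideanSpace ℂ ι)) ⊗ₖ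
      (Matrix.toEuclideanLin.symm (B : EuclideanSpace ℂ ν →ₗ[ℂ] EuclideanSpace ℂ μ))

def eqOpCLM {q₁ q₂ z : Type*} [Fintype q₁] [Fintype q₂] [Fintype z]
    [DecidableEq q₁] [DecidableEq q₂]
    (V1 : EuclideanSpace ℂ q₁ →L[ℂ] EuclideanSpace ℂ z)
    (V2 : EuclideanSpace ℂ q₂ →L[ℂ] EuclideanSpace ℂ z) :
    EuclideanSpace ℂ (q₁ × q₂) →L[ℂ] EuclideanSpace ℂ (q₁ × q₂) :=
  (reindexCLM (Equiv.prodComm q₂ q₁)).comp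
    (opTensCLM ((ContinuousLinearMap.adjoint V2).comp V1)
      ((ContinuousLinearMap.adjoint V1).comp V2))

def eqSub {q₁ q₂ z : Type*} [Fintype q₁] [Fintype q₂] [Fintype z]
    [DecidableEq q₁] [DecidableEq q₂]
    (V1 : EuclideanSpace ℂ q₁ →L[ℂ] EuclideanSpace ℂ z)
    (V2 : EuclideanSpace ℂ q₂ →L[ℂ] EuclideanSpace ℂ z) :
    Submodule ℂ (EuclideanSpace ℂ (q₁ × q₂)) :=
  LinearMap.ker
    ((eqOpCLM V1 V2 : EuclideanSpace ℂ (q₁ × q₂) →ₗ[ℂ] EuclideanSpace ℂ (q₁ × q₂)) - LinearMap.id)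

def eqFull {q₁ y₁ q₂ y₂ z : Type*}
    [Fintype q₁] [Fintype y₁] [Fintype q₂] [Fintype y₂] [Fintype z]
    [DecidableEq q₁] [DecidableEq q₂] [DecidableEq y₁] [DecidableEq y₂]
    (U1 : EuclideanSpace ℂ q₁ →L[ℂ] EuclideanSpace ℂ z)
    (U2 : EuclideanSpace ℂ q₂ →L[ℂ] EuclideanSpace ℂ z) :
    EuclideanSpace ℂ ((q₁ × y₁) × (q₂ × y₂)) →L[ℂ] EuclideanSpace ℂ ((q₁ × y₁) × (q₂ × y₂)) :=
  (reindexCLM (Equiv.prodProdProdComm q₁ q₂ y₁ y₂)).comp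
    ((opTensCLM (eqOpCLM U1 U2) (ContinuousLinearMap.id ℂ (EuclideanSpace ℂ (y₁ × y₂)))).comp
      (reindexCLM (Equiv.prodProdProdComm q₁ y₁ q₂ y₂)))

def tensRLin {ι κ : Type*} [Fintype ι] [Fintype κ] (ψ : EuclideanSpace ℂ κ) :
    EuclideanSpace ℂ ι →ₗ[ℂ] EuclideanSpace ℂ (ι × κ) where
  toFun φ := tensVec φ ψ
  map_add' x y := by ext p; simp [tensVec, PiLp.add_apply, add_mul]
  map_smul' c x := by ext p; simp [tensVec, PiLp.smul_apply, smul_eq_mul, mul_assoc]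

def tensSpan {ι κ : Type*} [Fintype ι] [Fintype κ]
    (S : Submodule ℂ (EuclideanSpace ℂ ι)) (T : Submodule ℂ (EuclideanSpace ℂ κ)) :
    Submodule ℂ (EuclideanSpace ℂ (ι × κ)) :=
  Submodule.span ℂ {z | ∃ x ∈ S, ∃ y ∈ T, z = tensVec x y}

def spanDiv {ι κ : Type*} [Fintype ι] [Fintype κ]
    (B : Submodule ℂ (EuclideanSpace ℂ (ι × κ))) (ψ : EuclideanSpace ℂ κ) :
    Submodule ℂ (EuclideanSpace ℂ ι) :=
  Submodule.comap (tensRLin ψ) B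

def rankOneCLM {H : Type*} [NormedAddCommGroup H] [InnerProductSpace ℂ H] (ψ : H) :
    H →L[ℂ] H :=
  (innerSL ℂ ψ).smulRight ψ

def ptraceRight {ι κ : Type*} [Fintype ι] [Fintype κ] [DecidableEq ι] [DecidableEq κ]
    (ρ : EuclideanSpace ℂ (ι × κ) →L[ℂ] EuclideanSpace ℂ (ι × κ)) :
    EuclideanSpace ℂ ι →L[ℂ] EuclideanSpace ℂ ι :=
  LinearMap.toContinuousLinearMap <| Matrix.toEuclideanLin <|
    Matrix.of fun i j => ∑ k : κ,
      Matrix.toEuclideanLin.symm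
        (ρ : EuclideanSpace ℂ (ι × κ) →ₗ[ℂ] EuclideanSpace ℂ (ι × κ)) (i, k) (j, k)

def ptraceLeft {ι κ : Type*} [Fintype ι] [Fintype κ] [DecidableEq ι] [DecidableEq κ]
    (ρ : EuclideanSpace ℂ (ι × κ) →L[ℂ] EuclideanSpace ℂ (ι × κ)) :
    EuclideanSpace ℂ κ →L[ℂ] EuclideanSpace ℂ κ :=
  LinearMap.toContinuousLinearMap <| Matrix.toEuclideanLin <|
    Matrix.of fun i j => ∑ k : ι,
      Matrix.toEuclideanLin.symm
        (ρ : EuclideanSpace ℂ (ι × κ) →ₗ[ℂ] EuclideanSpace ℂ (ι × κ)) (k, i) (k, j)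

end

/-- The reassociation `(Q1 × Q2) × R ≃ (Q1 × R) × Q2`. -/
def reassoc₁₇ (q₁ q₂ r : Type*) : (q₁ × q₂) × r ≃ (q₁ × r) × q₂ where
  toFun x := ((x.1.1, x.2), x.1.2)
  invFun y := ((y.1.1, y.2), y.1.2)
  left_inv _ := rfl
  right_inv _ := rfl


section Aux17

open EuclideanSpace Finset

noncomputable section

variable {ι κ μ ν : Type*} [Fintype ι] [Fintype κ] [Fintype μ] [Fintype ν]
  [DecidableEq ι] [DecidableEq κ] [DecidableEq μ] [DecidableEq ν]

set_option linter.unusedSectionVars false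

lemma toEucApply17 (M : Matrix ι κ ℂ) (v : EuclideanSpace ℂ κ) (i : ι) :
    Matrix.toEuclideanLin M v i = ∑ j, M i j * v j := rfl

lemma matEntry17 (L : EuclideanSpace ℂ κ →ₗ[ℂ] EuclideanSpace ℂ ι) (i : ι) (j : κ) :
    Matrix.toEuclideanLin.symm L i j = L (EuclideanSpace.single j 1) i := by
  conv_rhs => rw [← Matrix.toEuclideanLin.apply_symm_apply L]
  rw [toEucApply17]
  simp [EuclideanSpace.single_apply]

lemma clmApplyEntry17 (A : EuclideanSpace ℂ κ →L[ℂ] EuclideanSpace ℂ ι) (v : EuclideanSpace ℂ κ)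
    (i : ι) : A v i = ∑ j, A (EuclideanSpace.single j 1) i * v j := by
  have : v = ∑ j, v j • EuclideanSpace.single j 1 := by
    ext k
    rw [WithLp.ofLp_sum, Finset.sum_apply]
    simp [EuclideanSpace.single_apply]
  conv_lhs => rw [this]
  rw [map_sum]
  rw [WithLp.ofLp_sum, Finset.sum_apply]
  exact Finset.sum_congr rfl fun j _ => by simp [mul_comm]

lemma opTensApply17 (A : EuclideanSpace ℂ κ →L[ℂ] EuclideanSpace ℂ ι)
    (B : EuclideanSpace ℂ ν →L[ℂ] EuclideanSpace ℂ μ) (v : EuclideanSpace ℂ (κ × ν))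
    (i : ι) (m : μ) :
    opTensCLM A B v (i, m)
      = ∑ k, ∑ n, A (EuclideanSpace.single k 1) i * B (EuclideanSpace.single n 1) m * v (k, n) := by
  show Matrix.toEuclideanLin _ v (i, m) = _
  rw [toEucApply17, Fintype.sum_prod_type]
  exact Finset.sum_congr rfl fun k _ => Finset.sum_congr rfl fun n _ => by
    rw [Matrix.kroneckerMap_apply, matEntry17, matEntry17]
    rfl

lemma inner_tensVec17 (x x' : EuclideanSpace ℂ ι) (y y' : EuclideanSpace ℂ κ) :
    inner ℂ (tensVec x y) (tensVec x' y') = inner ℂ x x' * inner ℂ y y' := by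
  simp only [PiLp.inner_apply, RCLike.inner_apply, tensVec]
  rw [Fintype.sum_prod_type, Finset.sum_mul_sum]
  exact Finset.sum_congr rfl fun k _ => Finset.sum_congr rfl fun n _ => by
    simp [map_mul]; ring

lemma single_prod17 (i : ι) (k : κ) :
    (EuclideanSpace.single (i, k) 1 : EuclideanSpace ℂ (ι × κ))
      = tensVec (EuclideanSpace.single i 1) (EuclideanSpace.single k 1) := by
  ext p
  simp [tensVec, EuclideanSpace.single_apply, Prod.ext_iff, ite_and]
  rcases eq_or_ne p.1 i with h|h <;> rcases eq_or_ne p.2 k with h2|h2 <;> simp [h, h2]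

lemma opTens_tensVec17 (A : EuclideanSpace ℂ κ →L[ℂ] EuclideanSpace ℂ ι)
    (B : EuclideanSpace ℂ ν →L[ℂ] EuclideanSpace ℂ μ) (x : EuclideanSpace ℂ κ)
    (y : EuclideanSpace ℂ ν) :
    opTensCLM A B (tensVec x y) = tensVec (A x) (B y) := by
  ext ⟨i, m⟩
  rw [show (tensVec (A x) (B y)) (i, m) = A x i * B y m from rfl]
  rw [opTensApply17]
  rw [clmApplyEntry17 A x i, clmApplyEntry17 B y m, Finset.sum_mul_sum]
  exact Finset.sum_congr rfl fun k _ => Finset.sum_congr rfl fun n _ => by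
    show _ * _ * (x k * y n) = _; ring

lemma coordInner17 (x : EuclideanSpace ℂ ι) (i : ι) :
    x i = inner ℂ (EuclideanSpace.single i 1 : EuclideanSpace ℂ ι) x := by
  simp [EuclideanSpace.inner_single_left]

lemma eqOpApply17 {z : Type*} [Fintype z]
    (V1 : EuclideanSpace ℂ ι →L[ℂ] EuclideanSpace ℂ z)
    (V2 : EuclideanSpace ℂ κ →L[ℂ] EuclideanSpace ℂ z)
    (w : EuclideanSpace ℂ (ι × κ)) (a : ι) (b : κ) :
    eqOpCLM V1 V2 w (a, b)
      = ∑ c, ∑ d, (inner ℂ (V2 (EuclideanSpace.single b 1)) (V1 (EuclideanSpace.single c 1)) : ℂ)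
          * (inner ℂ (V1 (EuclideanSpace.single a 1)) (V2 (EuclideanSpace.single d 1)) : ℂ)
          * w (c, d) := by
  show opTensCLM ((ContinuousLinearMap.adjoint V2).comp V1)
      ((ContinuousLinearMap.adjoint V1).comp V2) w (b, a) = _
  rw [opTensApply17]
  exact Finset.sum_congr rfl fun c _ => Finset.sum_congr rfl fun d _ => by
    rw [ContinuousLinearMap.comp_apply, ContinuousLinearMap.comp_apply,
      coordInner17 ((ContinuousLinearMap.adjoint V2) (V1 (EuclideanSpace.single c 1))) b,
      coordInner17 ((ContinuousLinearMap.adjoint V1) (V2 (EuclideanSpace.single d 1))) a,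
      ContinuousLinearMap.adjoint_inner_right, ContinuousLinearMap.adjoint_inner_right]

/-- Contraction against `ψ` in the right slot. -/
def contrR17 (ψ : EuclideanSpace ℂ κ) :
    EuclideanSpace ℂ (ι × κ) →ₗ[ℂ] EuclideanSpace ℂ ι where
  toFun w := WithLp.toLp 2 fun i => ∑ k, (starRingEnd ℂ) (ψ k) * w (i, k)
  map_add' w w' := by
    ext i
    show ∑ k, _ * (w (i,k) + w' (i,k)) = (∑ k, _) + (∑ k, _)
    rw [← Finset.sum_add_distrib]
    exact Finset.sum_congr rfl fun k _ => by ring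
  map_smul' c w := by
    ext i
    show ∑ k, _ * (c * w (i,k)) = c * ∑ k, _
    rw [Finset.mul_sum]
    exact Finset.sum_congr rfl fun k _ => by ring

lemma contrR17_tensVec (ψ : EuclideanSpace ℂ κ) (x : EuclideanSpace ℂ ι)
    (y : EuclideanSpace ℂ κ) :
    contrR17 ψ (tensVec x y) = (inner ℂ ψ y : ℂ) • x := by
  ext i
  show ∑ k, (starRingEnd ℂ) (ψ k) * (x i * y k) = inner ℂ ψ y * x i
  rw [PiLp.inner_apply]
  simp only [RCLike.inner_apply]
  rw [Finset.sum_mul]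
  exact Finset.sum_congr rfl fun k _ => by ring

lemma contrR17_tensRLin (ψ : EuclideanSpace ℂ κ) (hψ : ‖ψ‖ = 1) (x : EuclideanSpace ℂ ι) :
    contrR17 ψ (tensRLin ψ x) = x := by
  have h1 : (inner ℂ ψ ψ : ℂ) = 1 := by
    rw [inner_self_eq_norm_sq_to_K, hψ]; norm_num
  have : tensRLin ψ x = tensVec x ψ := rfl
  rw [this, contrR17_tensVec, h1, one_smul]

end

end Aux17


section Key17

set_option maxHeartbeats 1000000

lemma tform17 {q₁ q₂ r z : Type*} [Fintype q₁] [Fintype q₂] [Fintype r] [Fintype z]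
    [DecidableEq q₁] [DecidableEq q₂] [DecidableEq r] [DecidableEq z]
    (U1 : EuclideanSpace ℂ q₁ →L[ℂ] EuclideanSpace ℂ z)
    (U2 : EuclideanSpace ℂ q₂ →L[ℂ] EuclideanSpace ℂ z)
    (ψ : EuclideanSpace ℂ r) (w : EuclideanSpace ℂ ((q₁ × r) × q₂)) :
    eqOpCLM (opTensCLM U1 (ContinuousLinearMap.id ℂ (EuclideanSpace ℂ r)))
        ((LinearMap.toContinuousLinearMap (tensRLin (ι := z) ψ)).comp U2) w
      = reindexCLM (reassoc₁₇ q₁ q₂ r)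
          (tensRLin ψ (eqOpCLM U1 U2
            (contrR17 ψ (reindexCLM (reassoc₁₇ q₁ q₂ r).symm w)))) := by
  set V1 := opTensCLM U1 (ContinuousLinearMap.id ℂ (EuclideanSpace ℂ r)) with hV1
  set V2 := (LinearMap.toContinuousLinearMap (tensRLin (ι := z) ψ)).comp U2 with hV2
  set C : EuclideanSpace ℂ (q₁ × q₂) :=
    contrR17 ψ (reindexCLM (reassoc₁₇ q₁ q₂ r).symm w) with hC
  have hCd : ∀ c d, C (c, d) = ∑ t, (starRingEnd ℂ) (ψ t) * w ((c, t), d) := fun c d => rfl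
  have hV1s : ∀ (c : q₁) (t : r), V1 (EuclideanSpace.single (c, t) 1)
      = tensVec (U1 (EuclideanSpace.single c 1)) (EuclideanSpace.single t 1) := by
    intro c t
    rw [hV1, single_prod17, opTens_tensVec17]
    rfl
  have hV2s : ∀ (b : q₂), V2 (EuclideanSpace.single b 1)
      = tensVec (U2 (EuclideanSpace.single b 1)) ψ := fun b => rfl
  ext ⟨⟨a, s⟩, b⟩
  show eqOpCLM V1 V2 w ((a, s), b) = eqOpCLM U1 U2 C (a, b) * ψ s
  rw [eqOpApply17, eqOpApply17, Fintype.sum_prod_type, Finset.sum_mul]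
  refine Finset.sum_congr rfl fun c _ => ?_
  rw [Finset.sum_comm, Finset.sum_mul]
  refine Finset.sum_congr rfl fun d _ => ?_
  have h2 : (inner ℂ (V1 (EuclideanSpace.single (a, s) 1)) (V2 (EuclideanSpace.single d 1)) : ℂ)
      = (inner ℂ (U1 (EuclideanSpace.single a 1)) (U2 (EuclideanSpace.single d 1)) : ℂ) * ψ s := by
    rw [hV1s, hV2s, inner_tensVec17, EuclideanSpace.inner_single_left]
    simp
  rw [hCd, Finset.mul_sum, Finset.sum_mul]
  refine Finset.sum_congr rfl fun t _ => ?_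
  have h1 : (inner ℂ (V2 (EuclideanSpace.single b 1)) (V1 (EuclideanSpace.single (c, t) 1)) : ℂ)
      = (inner ℂ (U2 (EuclideanSpace.single b 1)) (U1 (EuclideanSpace.single c 1)) : ℂ)
          * (starRingEnd ℂ) (ψ t) := by
    rw [hV1s, hV2s, inner_tensVec17, EuclideanSpace.inner_single_right]
    simp
  rw [h1, h2]
  ring

end Key17


lemma memEqSub17 {q₁ q₂ z : Type*} [Fintype q₁] [Fintype q₂] [Fintype z]
    [DecidableEq q₁] [DecidableEq q₂]
    (V1 : EuclideanSpace ℂ q₁ →L[ℂ] EuclideanSpace ℂ z)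
    (V2 : EuclideanSpace ℂ q₂ →L[ℂ] EuclideanSpace ℂ z)
    (x : EuclideanSpace ℂ (q₁ × q₂)) :
    x ∈ eqSub V1 V2 ↔ eqOpCLM V1 V2 x = x := by
  rw [eqSub, LinearMap.mem_ker, LinearMap.sub_apply, LinearMap.id_apply, sub_eq_zero,
    ContinuousLinearMap.coe_coe]

/-- quantum equality with an auxiliary register: for a unit vector `ψ ∈ R`,
`(Eq(U1,U2) ⊗ R) ∩ (Q1 ⊗ Q2 ⊗ span{ψ})`, transported by the canonical reassociation to
`(Q1 ⊗ R) ⊗ Q2`, equals `Eq(U1 ⊗ id_R, U2 ⊗ ψ)` where `(U2 ⊗ ψ) q = (U2 q) ⊗ ψ`. -/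
theorem stmt17 {q₁ q₂ r z : Type*} [Fintype q₁] [Fintype q₂] [Fintype r] [Fintype z]
    [DecidableEq q₁] [DecidableEq q₂] [DecidableEq r] [DecidableEq z]
    (U1 : EuclideanSpace ℂ q₁ →L[ℂ] EuclideanSpace ℂ z)
    (U2 : EuclideanSpace ℂ q₂ →L[ℂ] EuclideanSpace ℂ z)
    (ψ : EuclideanSpace ℂ r) (hψ : ‖ψ‖ = 1) :
    Submodule.map (reindexCLM (reassoc₁₇ q₁ q₂ r)).toLinearMap
        (tensSpan (eqSub U1 U2) ⊤ ⊓ tensSpan ⊤ (Submodule.span ℂ {ψ}))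
      = eqSub (opTensCLM U1 (ContinuousLinearMap.id ℂ (EuclideanSpace ℂ r)))
          ((LinearMap.toContinuousLinearMap (tensRLin (ι := z) ψ)).comp U2) := by
  classical
  have hcancel : ∀ v : EuclideanSpace ℂ ((q₁ × q₂) × r),
      reindexCLM (reassoc₁₇ q₁ q₂ r).symm (reindexCLM (reassoc₁₇ q₁ q₂ r) v) = v := by
    intro v; ext ⟨⟨a, b⟩, t⟩; rfl
  have hrange : tensSpan (⊤ : Submodule ℂ (EuclideanSpace ℂ (q₁ × q₂)))
      (Submodule.span ℂ {ψ}) ≤ LinearMap.range (tensRLin ψ) := by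
    rw [tensSpan, Submodule.span_le]
    rintro w ⟨x, -, y, hy, rfl⟩
    obtain ⟨c, rfl⟩ := Submodule.mem_span_singleton.mp hy
    refine ⟨c • x, ?_⟩
    ext p
    show (c • x) p.1 * ψ p.2 = x p.1 * (c • ψ) p.2
    simp [mul_comm, mul_left_comm]
    ring
  have hcomap : tensSpan (eqSub U1 U2) (⊤ : Submodule ℂ (EuclideanSpace ℂ r))
      ≤ Submodule.comap (contrR17 ψ) (eqSub U1 U2) := by
    rw [tensSpan, Submodule.span_le]
    rintro w ⟨x, hx, y, -, rfl⟩
    simp only [SetLike.mem_coe, Submodule.mem_comap, contrR17_tensVec]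
    exact Submodule.smul_mem _ _ hx
  ext w
  simp only [Submodule.mem_map, Submodule.mem_inf, ContinuousLinearMap.coe_coe]
  constructor
  · rintro ⟨v, ⟨hv1, hv2⟩, rfl⟩
    obtain ⟨x, rfl⟩ := hrange hv2
    have hx : eqOpCLM U1 U2 x = x := by
      have h := hcomap hv1
      rw [Submodule.mem_comap, contrR17_tensRLin ψ hψ, memEqSub17] at h
      exact h
    rw [memEqSub17, tform17, hcancel, contrR17_tensRLin ψ hψ, hx]
  · intro hw
    rw [memEqSub17, tform17] at hw
    set x := eqOpCLM U1 U2 (contrR17 ψ (reindexCLM (reassoc₁₇ q₁ q₂ r).symm w)) with hxdef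
    have hxval : contrR17 ψ (reindexCLM (reassoc₁₇ q₁ q₂ r).symm w) = x := by
      conv_lhs => rw [← hw]
      rw [hcancel, contrR17_tensRLin ψ hψ]
    have hxfix : eqOpCLM U1 U2 x = x := by
      conv_lhs => rw [← hxval]
    refine ⟨tensRLin ψ x, ⟨?_, ?_⟩, hw⟩
    · exact Submodule.subset_span ⟨x, (memEqSub17 U1 U2 x).mpr hxfix, ψ, Submodule.mem_top, rfl⟩
    · exact Submodule.subset_span ⟨x, Submodule.mem_top, ψ,
        Submodule.mem_span_singleton_self ψ, rfl⟩
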